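/- arXiv:1606.05268 — 4 statements merged into one kernel-verified Lean document; each statement's English description precedes it below -/
import Mathlib

section
/- Let C ⊆ A^n be a code of cardinality m ≥ 3 with encoding bijection λ : M → C, and let f : C → A^n be any map. Then f extends to a monomial map h : A^n → A^n (i.e., h restricted to C equals f) if and only if η_λ = η_{f∘λ}. -/
/-- Partitions of `Fin m` are represented as finsets of finsets. -/
abbrev Ptn (m : ℕ) := Finset (Finset (Fin m))

/-- `α` is a partition of `Fin m`: all classes are nonempty and every element
belongs to exactly one class. -/
def IsPartition {m : ℕ} (α : Ptn m) : Prop :=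
  (∀ c ∈ α, c.Nonempty) ∧ ∀ i : Fin m, ∃! c, c ∈ α ∧ i ∈ c

/-- `P`: the set of partitions of `M = Fin m` into at most `q` nonempty classes. -/
def Pset (m q : ℕ) : Set (Ptn m) :=
  {α | IsPartition α ∧ α.card ≤ q}

/-- `P₂`: the partitions of the form `{{i,j}, M ∖ {i,j}}` for 2-element subsets `{i,j}`. -/
def P2set (m : ℕ) : Set (Ptn m) :=
  {α | ∃ p : Finset (Fin m), p.card = 2 ∧ α = {p, pᶜ}}

/-- `O` as a set: the 2-element subsets of `M = Fin m`. -/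
def Oset (m : ℕ) : Set (Finset (Fin m)) := {p | p.card = 2}

/-- `O` as a type: the 2-element subsets of `M = Fin m`. -/
abbrev OO (m : ℕ) := {p : Finset (Fin m) // p.card = 2}

/-- `P` as a type. -/
abbrev PP (m q : ℕ) := {α : Ptn m // α ∈ Pset m q}

noncomputable instance (m q : ℕ) : Fintype (PP m q) := Fintype.ofFinite _

/-- The canonical action of `S(M)` on partitions: `g({c₁,…,cₜ}) = {g(c₁),…,g(cₜ)}`. -/
def permPart {m : ℕ} (g : Equiv.Perm (Fin m)) (α : Ptn m) : Ptn m :=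
  α.image fun c => c.image g

/-- The canonical action of `S(M)` on subsets of `M`. -/
def permPair {m : ℕ} (g : Equiv.Perm (Fin m)) (p : Finset (Fin m)) : Finset (Fin m) :=
  p.image g

/-- `H` is closed under the action `act` on `S` if every `g` that maps each
`H`-orbit of `S` onto itself belongs to `H`. -/
def ClosedUnder {m : ℕ} {X : Type*} (act : Equiv.Perm (Fin m) → X → X) (S : Set X)
    (H : Set (Equiv.Perm (Fin m))) : Prop :=
  ∀ g : Equiv.Perm (Fin m), (∀ x ∈ S, ∃ h ∈ H, act g x = act h x) → g ∈ H

section Code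

variable {m n : ℕ} {A : Type*} [Fintype A] [DecidableEq A]

/-- A map `h : Aⁿ → Aⁿ` is monomial if `h(a) = (σ₁(a_{π(1)}), …, σₙ(a_{π(n)}))`
for a permutation `π ∈ Sₙ` and permutations `σ₁,…,σₙ` of `A`. -/
def IsMonomial (h : (Fin n → A) → (Fin n → A)) : Prop :=
  ∃ (π : Equiv.Perm (Fin n)) (σ : Fin n → Equiv.Perm A),
    ∀ (a : Fin n → A) (k : Fin n), h a k = σ k (a (π k))

/-- `Iso(C)`: the permutations `g` of the messages such that `λ ∘ g ∘ λ⁻¹` is a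
Hamming isometry of the code encoded by `lam`. -/
def IsoSet (lam : Fin m → Fin n → A) : Set (Equiv.Perm (Fin m)) :=
  {g | ∀ i j : Fin m, hammingDist (lam (g i)) (lam (g j)) = hammingDist (lam i) (lam j)}

/-- `Mon(C)`: the elements of `Iso(C)` such that `λ ∘ g ∘ λ⁻¹` extends to a
monomial map of `Aⁿ`. -/
def MonSet (lam : Fin m → Fin n → A) : Set (Equiv.Perm (Fin m)) :=
  {g | g ∈ IsoSet lam ∧
    ∃ h : (Fin n → A) → (Fin n → A), IsMonomial h ∧ ∀ i : Fin m, h (lam i) = lam (g i)}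

/-- `Ψ(x) = {x⁻¹(a) : a ∈ A} ∖ {∅}`, the partition of `M` induced by `x : M → A`. -/
def PsiF (x : Fin m → A) : Ptn m :=
  (Finset.univ.image fun a : A => Finset.univ.filter fun i : Fin m => x i = a).erase ∅

/-- The multiplicity function `η_λ(α) = |{k : Ψ(λ_k) = α}|`. -/
def eta (lam : Fin m → Fin n → A) (α : Ptn m) : ℚ :=
  (((Finset.univ : Finset (Fin n)).filter fun k => PsiF (fun i => lam i k) = α).card : ℚ)

/-- The multiplicity function, restricted to `P`. -/
def etaP (q : ℕ) (lam : Fin m → Fin n → A) : PP m q → ℚ := fun α => eta lam α.1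

end Code

open Classical in
/-- `Δ_α({i,j}) = 0` if `i` and `j` lie in the same class of `α`, and `1` otherwise. -/
noncomputable def Delta {m q : ℕ} (α : PP m q) (p : OO m) : ℚ :=
  if ∃ c ∈ α.1, p.1 ⊆ c then 0 else 1

/-- The linear map `W : F(P,ℚ) → F(O,ℚ)`, `W(η)(p) = Σ_{α∈P} η(α)Δ_α(p)`. -/
noncomputable def WLin (m q : ℕ) : (PP m q → ℚ) →ₗ[ℚ] (OO m → ℚ) where
  toFun η := fun p => ∑ α : PP m q, η α * Delta α p
  map_add' x y := by
    funext p
    simp [add_mul, Finset.sum_add_distrib]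
  map_smul' c x := by
    funext p
    simp [Finset.mul_sum, mul_assoc]

/-- The matrix `B`: `B_{p,t} = 1` if `|p ∩ t| = 1`, and `0` otherwise. -/
def Bmat (m : ℕ) : Matrix (OO m) (OO m) ℚ :=
  Matrix.of fun p t => if (p.1 ∩ t.1).card = 1 then 1 else 0

/-- The matrix `D`: `2(m−2)(m−4)·D_{p,t}` equals `−m²+8m−14` if `p = t`,
`m−4` if `|p∩t| = 1`, and `−2` if `p ∩ t = ∅`. -/
def Dmat (m : ℕ) : Matrix (OO m) (OO m) ℚ :=
  Matrix.of fun p t =>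
    (if p = t then -(m : ℚ) ^ 2 + 8 * m - 14
      else if (p.1 ∩ t.1).card = 1 then (m : ℚ) - 4 else -2) /
      (2 * ((m : ℚ) - 2) * ((m : ℚ) - 4))

/-- `ξ_x = Σ_{r∈O} x(r) Σ_{p∈O} D_{r,p} · id_{{p, M∖p}}`. -/
noncomputable def xi (m q : ℕ) (x : OO m → ℚ) : PP m q → ℚ := fun α =>
  ∑ r : OO m, x r * ∑ p : OO m, Dmat m r p * (if α.1 = ({p.1, p.1ᶜ} : Ptn m) then 1 else 0)

/-- `ζ_α = id_α − ξ_{Δ_α}`. -/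
noncomputable def zeta (m q : ℕ) (α : PP m q) : PP m q → ℚ :=
  (fun β => if β = α then 1 else 0) - xi m q fun p => Delta α p

/-- `V₀`: the functions in `F(P,ℚ)` vanishing on `P ∖ P₂`. -/
def V0 (m q : ℕ) : Set (PP m q → ℚ) :=
  {η | ∀ α : PP m q, (α : Ptn m) ∉ P2set m → η α = 0}

open Classical in
/-- `id_{P₂} = Σ_{α∈P₂} id_α`. -/
noncomputable def idP2 (m q : ℕ) : PP m q → ℚ := fun α =>
  if (α : Ptn m) ∈ P2set m then 1 else 0

theorem permPart_mem_Pset {m q : ℕ} (g : Equiv.Perm (Fin m)) {α : Ptn m}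
    (hα : α ∈ Pset m q) : permPart g α ∈ Pset m q := by
  obtain ⟨⟨hne, huniq⟩, hcard⟩ := hα
  refine ⟨⟨?_, ?_⟩, le_trans Finset.card_image_le hcard⟩
  · intro c hc
    simp only [permPart, Finset.mem_image] at hc
    obtain ⟨d, hd, rfl⟩ := hc
    exact (hne d hd).image g
  · intro i
    obtain ⟨c, ⟨hc, hic⟩, hun⟩ := huniq (g.symm i)
    refine ⟨c.image g, ⟨?_, ?_⟩, ?_⟩
    · simp only [permPart, Finset.mem_image]
      exact ⟨c, hc, rfl⟩
    · exact Finset.mem_image.2 ⟨g.symm i, hic, g.apply_symm_apply i⟩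
    · rintro d ⟨hd, hid⟩
      simp only [permPart, Finset.mem_image] at hd
      obtain ⟨e, he, rfl⟩ := hd
      rw [Finset.mem_image] at hid
      obtain ⟨j, hj, hji⟩ := hid
      have hjs : j = g.symm i := by
        apply g.injective
        rw [hji, g.apply_symm_apply]
      subst hjs
      rw [hun e ⟨he, hj⟩]

/-- The action of `S(M)` on `P`. -/
def permPP {m q : ℕ} (g : Equiv.Perm (Fin m)) (α : PP m q) : PP m q :=
  ⟨permPart g α.1, permPart_mem_Pset g α.2⟩

/-- The action of `S(M)` on `F(P,ℚ)`: `g(η)(α) = η(g⁻¹(α))`. -/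
def permF {m q : ℕ} (g : Equiv.Perm (Fin m)) (η : PP m q → ℚ) : PP m q → ℚ :=
  fun α => η (permPP g⁻¹ α)

/-- `Stab(η) = {g ∈ S(M) : g(η) = η}`. -/
def StabSet {m q : ℕ} (η : PP m q → ℚ) : Set (Equiv.Perm (Fin m)) :=
  {g | permF g η = η}

/-- `Stab_W(η) = {g ∈ S(M) : W(g(η)) = W(η)}`. -/
def StabWSet (m q : ℕ) (η : PP m q → ℚ) : Set (Equiv.Perm (Fin m)) :=
  {g | WLin m q (permF g η) = WLin m q η}

section AuxLemmas
variable {m : ℕ} {A : Type*} [Fintype A] [DecidableEq A]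

lemma PsiF_mem_Pset (x : Fin m → A) : PsiF x ∈ Pset m (Fintype.card A) := by
  refine ⟨⟨?_, ?_⟩, ?_⟩
  · intro c hc
    rw [PsiF, Finset.mem_erase] at hc
    exact Finset.nonempty_iff_ne_empty.2 hc.1
  · intro i
    refine ⟨Finset.univ.filter fun j => x j = x i, ⟨?_, by simp⟩, ?_⟩
    · rw [PsiF, Finset.mem_erase]
      constructor
      · intro h
        have : i ∈ (∅ : Finset (Fin m)) := h ▸ (by simp : i ∈ Finset.univ.filter fun j => x j = x i)
        simp at this
      · exact Finset.mem_image.2 ⟨x i, Finset.mem_univ _, rfl⟩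
    · rintro c ⟨hc, hic⟩
      rw [PsiF, Finset.mem_erase, Finset.mem_image] at hc
      obtain ⟨_, ⟨a, _, rfl⟩⟩ := hc
      simp only [Finset.mem_filter] at hic
      have : a = x i := hic.2.symm
      subst this
      rfl
  · calc (PsiF x).card ≤ _ := Finset.card_erase_le
      _ ≤ _ := Finset.card_image_le
      _ = Fintype.card A := Finset.card_univ

lemma PsiF_comp_perm (σ : Equiv.Perm A) (x : Fin m → A) :
    PsiF (fun i => σ (x i)) = PsiF x := by
  unfold PsiF
  congr 1
  have h1 : (fun a : A => Finset.univ.filter fun i : Fin m => σ (x i) = a)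
      = (fun a : A => Finset.univ.filter fun i : Fin m => x i = a) ∘ σ.symm := by
    funext a
    ext i
    simp [Equiv.eq_symm_apply, eq_comm]
  rw [h1, ← Finset.image_image]
  congr 1
  simp [Finset.image_univ_equiv]

lemma kernel_of_PsiF_eq {x y : Fin m → A} (h : PsiF x = PsiF y) :
    ∀ i j, x i = x j → y i = y j := by
  intro i j hij
  have hc : (Finset.univ.filter fun k => x k = x i) ∈ PsiF x := by
    rw [PsiF, Finset.mem_erase]
    refine ⟨?_, Finset.mem_image.2 ⟨x i, Finset.mem_univ _, rfl⟩⟩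
    intro he
    have : i ∈ (∅ : Finset (Fin m)) := he ▸ (by simp : i ∈ Finset.univ.filter fun k => x k = x i)
    simp at this
  rw [h, PsiF, Finset.mem_erase, Finset.mem_image] at hc
  obtain ⟨_, b, _, hb⟩ := hc
  have hi : y i = b := by
    have : i ∈ Finset.univ.filter fun k => y k = b := hb ▸ (by simp)
    simpa using this
  have hj : y j = b := by
    have : j ∈ Finset.univ.filter fun k => y k = b := hb ▸ (by simp [hij.symm])
    simpa using this
  rw [hi, hj]

lemma exists_perm_comp {x y : Fin m → A} (h : PsiF x = PsiF y) :
    ∃ σ : Equiv.Perm A, ∀ i, σ (x i) = y i := by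
  classical
  have hker : ∀ i j, x i = x j ↔ y i = y j := fun i j =>
    ⟨kernel_of_PsiF_eq h i j, kernel_of_PsiF_eq h.symm i j⟩
  set p : A → Prop := fun a => ∃ i, x i = a with hp
  set q : A → Prop := fun a => ∃ i, y i = a with hq
  let F : {a // p a} → {a // q a} := fun a => ⟨y a.2.choose, a.2.choose, rfl⟩
  have hFval : ∀ (a : {a // p a}), (F a).1 = y a.2.choose := fun a => rfl
  have hbij : Function.Bijective F := by
    constructor
    · rintro ⟨a, ha⟩ ⟨b, hb⟩ hab
      have : y ha.choose = y hb.choose := congrArg Subtype.val hab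
      have hx : x ha.choose = x hb.choose := (hker _ _).2 this
      have h1 := ha.choose_spec
      have h2 := hb.choose_spec
      refine Subtype.ext ?_
      show a = b
      rw [← h1, ← h2, hx]
    · rintro ⟨b, i, hi⟩
      refine ⟨⟨x i, i, rfl⟩, Subtype.ext ?_⟩
      have hc : x (⟨i, rfl⟩ : ∃ j, x j = x i).choose = x i := (⟨i, rfl⟩ : ∃ j, x j = x i).choose_spec
      have : y (⟨i, rfl⟩ : ∃ j, x j = x i).choose = y i := (hker _ _).1 hc
      rw [hFval, this, hi]
  let e := Equiv.ofBijective F hbij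
  refine ⟨e.extendSubtype, fun i => ?_⟩
  rw [Equiv.extendSubtype_apply_of_mem e (x i) ⟨i, rfl⟩]
  have hc : x (⟨i, rfl⟩ : ∃ j, x j = x i).choose = x i := (⟨i, rfl⟩ : ∃ j, x j = x i).choose_spec
  have hval : (e ⟨x i, ⟨i, rfl⟩⟩ : A) = y (⟨i, rfl⟩ : ∃ j, x j = x i).choose := rfl
  rw [hval]
  exact (hker _ _).1 hc

lemma exists_perm_of_counts {n : ℕ} {β : Type*} [DecidableEq β] (F G : Fin n → β)
    (h : ∀ b, (Finset.univ.filter fun k => F k = b).card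
        = (Finset.univ.filter fun k => G k = b).card) :
    ∃ π : Equiv.Perm (Fin n), ∀ k, F (π k) = G k := by
  classical
  have hcard : ∀ b, Fintype.card {k // G k = b} = Fintype.card {k // F k = b} := by
    intro b
    rw [Fintype.card_subtype, Fintype.card_subtype, h b]
  let e : ∀ b, {k // G k = b} ≃ {k // F k = b} := fun b => Fintype.equivOfCardEq (hcard b)
  let π : Equiv.Perm (Fin n) :=
    ((Equiv.sigmaFiberEquiv G).symm.trans (Equiv.sigmaCongrRight e)).trans
      (Equiv.sigmaFiberEquiv F)
  refine ⟨π, fun k => ?_⟩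
  show F ((Equiv.sigmaFiberEquiv F) ((Equiv.sigmaCongrRight e) ((Equiv.sigmaFiberEquiv G).symm k))) = G k
  have h1 : (Equiv.sigmaFiberEquiv G).symm k = ⟨G k, k, rfl⟩ := rfl
  rw [h1]
  exact (e (G k) ⟨k, rfl⟩).2

lemma card_filter_comp_perm {n : ℕ} (π : Equiv.Perm (Fin n)) (P : Fin n → Prop) [DecidablePred P] :
    (Finset.univ.filter fun k => P (π k)).card = (Finset.univ.filter P).card := by
  apply Finset.card_bij (fun k _ => π k)
  · intro k hk; simp only [Finset.mem_filter, Finset.mem_univ, true_and] at hk ⊢; exact hk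
  · intro a _ b _ hab; exact π.injective hab
  · intro b hb
    exact ⟨π.symm b, by simpa using (by simpa using hb : P b), π.apply_symm_apply b⟩

end AuxLemmas

/-- a map `f : C → Aⁿ` extends to a monomial map iff `η_λ = η_{f∘λ}`. -/
theorem extends_monomial_iff_eta_eq {A : Type*} [Fintype A] [DecidableEq A]
    (hq : 2 ≤ Fintype.card A) {m n : ℕ} (hm : 3 ≤ m) (hn : 0 < n)
    (lam : Fin m → Fin n → A) (hlam : Function.Injective lam)
    (f : Set.range lam → (Fin n → A)) :
    (∃ h : (Fin n → A) → (Fin n → A), IsMonomial h ∧ ∀ a : Set.range lam, h a = f a)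
      ↔ ∀ α ∈ Pset m (Fintype.card A),
          eta lam α = eta (fun i => f ⟨lam i, Set.mem_range_self i⟩) α := by
  classical
  set μ : Fin m → Fin n → A := fun i => f ⟨lam i, Set.mem_range_self i⟩ with hμ
  constructor
  · rintro ⟨h, ⟨π, σ, hmon⟩, hext⟩ α hα
    have hμk : ∀ k i, μ i k = σ k (lam i (π k)) := by
      intro k i
      have h1 : h (lam i) = f ⟨lam i, Set.mem_range_self i⟩ := hext ⟨lam i, Set.mem_range_self i⟩
      rw [hμ]
      simp only [← h1, hmon]
    have hPsi : ∀ k, PsiF (fun i => μ i k) = PsiF (fun i => lam i (π k)) := by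
      intro k
      have : (fun i => μ i k) = fun i => σ k (lam i (π k)) := funext fun i => hμk k i
      rw [this]
      exact PsiF_comp_perm (σ k) _
    unfold eta
    norm_cast
    calc (Finset.univ.filter fun k => PsiF (fun i => lam i k) = α).card
        = (Finset.univ.filter fun k => PsiF (fun i => lam i (π k)) = α).card :=
          (card_filter_comp_perm π _).symm
      _ = (Finset.univ.filter fun k => PsiF (fun i => μ i k) = α).card := by
          congr 1
          apply Finset.filter_congr
          intro k _
          rw [hPsi k]
  · intro hyp
    have hnat : ∀ α : Ptn m, (Finset.univ.filter fun k => PsiF (fun i => lam i k) = α).card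
        = (Finset.univ.filter fun k => PsiF (fun i => μ i k) = α).card := by
      intro α
      by_cases hα : α ∈ Pset m (Fintype.card A)
      · have h1 := hyp α hα
        unfold eta at h1
        exact_mod_cast h1
      · rw [Finset.filter_false_of_mem, Finset.filter_false_of_mem]
        · intro k _ hk
          exact hα (hk ▸ PsiF_mem_Pset _)
        · intro k _ hk
          exact hα (hk ▸ PsiF_mem_Pset _)
    obtain ⟨π, hπ⟩ := exists_perm_of_counts (fun k => PsiF fun i => lam i k)
      (fun k => PsiF fun i => μ i k) hnat
    have hσ : ∀ k, ∃ σ : Equiv.Perm A, ∀ i, σ (lam i (π k)) = μ i k := fun k =>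
      exists_perm_comp (hπ k)
    choose σ hσ using hσ
    refine ⟨fun a k => σ k (a (π k)), ⟨π, σ, fun a k => rfl⟩, ?_⟩
    intro a
    obtain ⟨i, hi⟩ := a.2
    have ha : a = ⟨lam i, Set.mem_range_self i⟩ := Subtype.ext hi.symm
    rw [ha]
    funext k
    exact hσ k i
end

section
/- Let m be an integer with m ≥ 5 or m = 3. Then BD = DB = I, where I is the identity matrix of size |O| × |O|; in particular B is invertible with B⁻¹ = D. -/
section Statement10Aux

open Finset

private lemma inter_empty_of_ne {m : ℕ} (r t : OO m) (h : r ≠ t)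
    (h1 : (r.1 ∩ t.1).card ≠ 1) : r.1 ∩ t.1 = ∅ := by
  have hle : (r.1 ∩ t.1).card ≤ 2 := by
    calc (r.1 ∩ t.1).card ≤ r.1.card := card_le_card inter_subset_left
    _ = 2 := r.2
  have h2 : (r.1 ∩ t.1).card ≠ 2 := by
    intro hc
    have hrt : r.1 ∩ t.1 = r.1 :=
      eq_of_subset_of_card_le inter_subset_left (by rw [hc, r.2])
    have hsub : r.1 ⊆ t.1 := hrt ▸ inter_subset_right
    have : r.1 = t.1 := eq_of_subset_of_card_le hsub (by rw [r.2, t.2])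
    exact h (Subtype.ext this)
  have : (r.1 ∩ t.1).card = 0 := by omega
  exact card_eq_zero.mp this

private lemma card_key {m : ℕ} (p t : Finset (Fin m)) (hp : p.card = 2) :
    ((Finset.univ : Finset (OO m)).filter
      (fun r => (p ∩ r.1).card = 1 ∧ r.1 ∩ t = ∅)).card
      = (p \ t).card * ((p ∪ t)ᶜ).card := by
  classical
  rw [← Finset.card_product]
  refine (Finset.card_bij
    (fun xy (hxy : xy ∈ (p \ t) ×ˢ (p ∪ t)ᶜ) =>
      (⟨{xy.1, xy.2}, by
        rcases Finset.mem_product.mp hxy with ⟨hx, hy⟩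
        have hxp : xy.1 ∈ p := (Finset.mem_sdiff.mp hx).1
        have hy' : xy.2 ∉ p ∪ t := Finset.mem_compl.mp hy
        have hne : xy.1 ≠ xy.2 := by
          intro he; exact hy' (Finset.mem_union_left _ (he ▸ hxp))
        exact Finset.card_pair hne⟩ : OO m))
    ?_ ?_ ?_).symm
  · rintro ⟨x, y⟩ hxy
    rcases Finset.mem_product.mp hxy with ⟨hx, hy⟩
    have hxp : x ∈ p := (Finset.mem_sdiff.mp hx).1
    have hxt : x ∉ t := (Finset.mem_sdiff.mp hx).2
    have hy' : y ∉ p ∪ t := Finset.mem_compl.mp hy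
    have hyp : y ∉ p := fun h => hy' (Finset.mem_union_left _ h)
    have hyt : y ∉ t := fun h => hy' (Finset.mem_union_right _ h)
    refine Finset.mem_filter.mpr ⟨Finset.mem_univ _, ?_, ?_⟩
    · have : p ∩ ({x, y} : Finset (Fin m)) = {x} := by
        ext z
        simp only [Finset.mem_inter, Finset.mem_insert, Finset.mem_singleton]
        constructor
        · rintro ⟨hz, rfl | rfl⟩
          · rfl
          · exact absurd hz hyp
        · rintro rfl; exact ⟨hxp, Or.inl rfl⟩
      rw [this, Finset.card_singleton]
    · apply Finset.eq_empty_of_forall_notMem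
      intro z hz
      rcases Finset.mem_inter.mp hz with ⟨hz1, hz2⟩
      rcases Finset.mem_insert.mp hz1 with rfl | hz1
      · exact hxt hz2
      · have hz1' : z = y := Finset.mem_singleton.mp hz1
        subst hz1'; exact hyt hz2
  · rintro ⟨x, y⟩ hxy ⟨x', y'⟩ hxy' heq
    rcases Finset.mem_product.mp hxy with ⟨hx, hy⟩
    rcases Finset.mem_product.mp hxy' with ⟨hx', hy'⟩
    have hxp : x ∈ p := (Finset.mem_sdiff.mp hx).1
    have hxp' : x' ∈ p := (Finset.mem_sdiff.mp hx').1
    have hyp : y ∉ p := fun h => (Finset.mem_compl.mp hy) (Finset.mem_union_left _ h)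
    have hyp' : y' ∉ p := fun h => (Finset.mem_compl.mp hy') (Finset.mem_union_left _ h)
    have hset : ({x, y} : Finset (Fin m)) = {x', y'} := congrArg Subtype.val heq
    have hx'' : x' ∈ ({x, y} : Finset (Fin m)) := by
      rw [hset]; exact Finset.mem_insert_self _ _
    have hy'' : y' ∈ ({x, y} : Finset (Fin m)) := by
      rw [hset]; exact Finset.mem_insert_of_mem (Finset.mem_singleton_self _)
    have hxx : x' = x := by
      rcases Finset.mem_insert.mp hx'' with h | h
      · exact h
      · exact absurd (Finset.mem_singleton.mp h ▸ hxp') hyp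
    have hyy : y' = y := by
      rcases Finset.mem_insert.mp hy'' with h | h
      · exact absurd (h ▸ hxp) hyp'
      · exact Finset.mem_singleton.mp h
    simp [hxx, hyy]
  · intro r hr
    rcases Finset.mem_filter.mp hr with ⟨-, h1, h2⟩
    obtain ⟨x, hx⟩ := Finset.card_eq_one.mp h1
    have hxr : x ∈ r.1 := (hx ▸ (Finset.mem_singleton_self x : x ∈ ({x} : Finset (Fin m)))
      |> fun h => Finset.mem_inter.mp h |>.2)
    have hxp : x ∈ p := (hx ▸ (Finset.mem_singleton_self x : x ∈ ({x} : Finset (Fin m)))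
      |> fun h => Finset.mem_inter.mp h |>.1)
    obtain ⟨u, v, huv, hruv⟩ := Finset.card_eq_two.mp r.2
    have hrt : ∀ z ∈ r.1, z ∉ t := fun z hz ht =>
      Finset.eq_empty_iff_forall_notMem.mp h2 z (Finset.mem_inter.mpr ⟨hz, ht⟩)
    -- determine the "other" element y
    have hxuv : x = u ∨ x = v := by
      have := hruv ▸ hxr
      simpa using this
    obtain ⟨y, hyne, hrxy⟩ : ∃ y, y ≠ x ∧ r.1 = {x, y} := by
      rcases hxuv with rfl | rfl
      · exact ⟨v, Ne.symm huv, by rw [hruv]⟩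
      · exact ⟨u, huv, by rw [hruv, Finset.pair_comm]⟩
    have hyr : y ∈ r.1 := by rw [hrxy]; exact Finset.mem_insert_of_mem (Finset.mem_singleton_self _)
    have hyp : y ∉ p := by
      intro hyp
      have : y ∈ p ∩ r.1 := Finset.mem_inter.mpr ⟨hyp, hyr⟩
      rw [hx, Finset.mem_singleton] at this
      exact hyne this
    refine ⟨(x, y), ?_, ?_⟩
    · refine Finset.mem_product.mpr ⟨?_, ?_⟩
      · exact Finset.mem_sdiff.mpr ⟨hxp, hrt x hxr⟩
      · refine Finset.mem_compl.mpr ?_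
        intro h
        rcases Finset.mem_union.mp h with h | h
        · exact hyp h
        · exact hrt y hyr h
    · exact Subtype.ext hrxy.symm

private lemma Bmat_mul_Dmat_eq_one {m : ℕ}
    (hm2 : ((m : ℚ) - 2) ≠ 0) (hm4 : ((m : ℚ) - 4) ≠ 0) :
    Bmat m * Dmat m = 1 := by
  classical
  ext p t
  have h2m : 2 ≤ m := by
    calc 2 = p.1.card := p.2.symm
    _ ≤ (Finset.univ : Finset (Fin m)).card := Finset.card_le_univ _
    _ = m := by simp
  set K : ℚ := 2 * ((m : ℚ) - 2) * ((m : ℚ) - 4) with hK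
  have hKne : K ≠ 0 := mul_ne_zero (mul_ne_zero two_ne_zero hm2) hm4
  have key : ∀ r : OO m, Bmat m p r * Dmat m r t =
      (((m:ℚ) - 4) * (if (p.1 ∩ r.1).card = 1 ∧ r.1 ∩ (∅ : Finset (Fin m)) = ∅
          then (1:ℚ) else 0)
       + (-(m:ℚ)^2 + 7*m - 10) * (if (p.1 ∩ r.1).card = 1 ∧ r = t then (1:ℚ) else 0)
       + (2 - (m:ℚ)) * (if (p.1 ∩ r.1).card = 1 ∧ r.1 ∩ t.1 = ∅ then (1:ℚ) else 0)) / K := by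
    intro r
    simp only [Bmat, Dmat, Matrix.of_apply, Finset.inter_empty, and_true, ← hK]
    by_cases h1 : (p.1 ∩ r.1).card = 1
    · by_cases h2 : r = t
      · subst h2
        have hne2 : r.1 ∩ r.1 ≠ ∅ := by
          rw [Finset.inter_self]
          intro h
          have := r.2
          rw [h] at this
          simp at this
        simp only [h1, hne2, if_pos rfl, true_and, and_true, and_false, and_self,
          if_true, if_false]
        ring
      · by_cases h3 : (r.1 ∩ t.1).card = 1
        · have hne3 : r.1 ∩ t.1 ≠ ∅ := by
            intro h; rw [h] at h3; simp at h3
          simp only [h1, if_true, h2, if_false, h3, and_true, and_false, true_and,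
            if_neg hne3]
          ring
        · have hemp := inter_empty_of_ne r t h2 h3
          simp only [h1, if_true, h2, if_false, h3, and_true, and_false, true_and,
            if_pos hemp]
          ring
    · simp [h1]
  have S1 : (∑ r : OO m, (if (p.1 ∩ r.1).card = 1 ∧ r.1 ∩ (∅ : Finset (Fin m)) = ∅
      then (1:ℚ) else 0)) = 2 * ((m:ℚ) - 2) := by
    rw [Finset.sum_boole, card_key p.1 ∅ p.2]
    have h1 : (p.1 \ ∅).card = 2 := by rw [Finset.sdiff_empty, p.2]
    have h2 : ((p.1 ∪ ∅)ᶜ).card = m - 2 := by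
      rw [Finset.union_empty, Finset.card_compl, p.2, Fintype.card_fin]
    rw [h1, h2, Nat.cast_mul, Nat.cast_sub h2m]
    push_cast
    ring
  have S2 : (∑ r : OO m, (if (p.1 ∩ r.1).card = 1 ∧ r = t then (1:ℚ) else 0))
      = if (p.1 ∩ t.1).card = 1 then (1:ℚ) else 0 := by
    rw [Finset.sum_eq_single t]
    · simp
    · intro r _ hrt; simp [hrt]
    · intro h; exact absurd (Finset.mem_univ t) h
  have S3 : (∑ r : OO m, (if (p.1 ∩ r.1).card = 1 ∧ r.1 ∩ t.1 = ∅ then (1:ℚ) else 0))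
      = ((p.1 \ t.1).card : ℚ) * (((p.1 ∪ t.1)ᶜ).card : ℚ) := by
    rw [Finset.sum_boole, card_key p.1 t.1 p.2, Nat.cast_mul]
  rw [Matrix.mul_apply, Finset.sum_congr rfl (fun r _ => key r), ← Finset.sum_div,
    Finset.sum_add_distrib, Finset.sum_add_distrib, ← Finset.mul_sum, ← Finset.mul_sum,
    ← Finset.mul_sum, S1, S2, S3]
  by_cases hpt : p = t
  · subst hpt
    have hc : ¬ (p.1 ∩ p.1).card = 1 := by
      rw [Finset.inter_self, p.2]; norm_num
    have hd : (p.1 \ p.1).card = 0 := by rw [Finset.sdiff_self, Finset.card_empty]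
    rw [Matrix.one_apply_eq, if_neg hc, hd]
    rw [div_eq_iff hKne]
    push_cast
    ring
  · rw [Matrix.one_apply_ne hpt]
    have hcard : (p.1 \ t.1).card + (p.1 ∩ t.1).card = 2 := by
      rw [Finset.card_sdiff_add_card_inter, p.2]
    have hu : (p.1 ∪ t.1).card + (p.1 ∩ t.1).card = 4 := by
      rw [Finset.card_union_add_card_inter, p.2, t.2]
    have hule : (p.1 ∪ t.1).card ≤ m := by
      calc (p.1 ∪ t.1).card ≤ Fintype.card (Fin m) := Finset.card_le_univ _
      _ = m := Fintype.card_fin m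
    have hcompl : ((p.1 ∪ t.1)ᶜ).card = m - (p.1 ∪ t.1).card := by
      rw [Finset.card_compl, Fintype.card_fin]
    by_cases hc : (p.1 ∩ t.1).card = 1
    · have hd : (p.1 \ t.1).card = 1 := by omega
      have hu3 : (p.1 ∪ t.1).card = 3 := by omega
      have h3m : 3 ≤ m := hu3 ▸ hule
      rw [if_pos hc, hd, hcompl, hu3, Nat.cast_sub h3m]
      rw [div_eq_iff hKne]
      push_cast
      ring
    · have hemp := inter_empty_of_ne p t hpt hc
      have hc0 : (p.1 ∩ t.1).card = 0 := by rw [hemp]; rfl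
      have hd : (p.1 \ t.1).card = 2 := by omega
      have hu4 : (p.1 ∪ t.1).card = 4 := by omega
      have h4m : 4 ≤ m := hu4 ▸ hule
      rw [if_neg hc, hd, hcompl, hu4, Nat.cast_sub h4m]
      rw [div_eq_iff hKne]
      push_cast
      ring

end Statement10Aux

/-- for `m ≥ 5` or `m = 3`, `BD = DB = I`; in particular `B` is invertible
with `B⁻¹ = D`. -/
theorem Bmat_mul_Dmat (m : ℕ) (hm : 5 ≤ m ∨ m = 3) :
    Bmat m * Dmat m = 1 ∧ Dmat m * Bmat m = 1 ∧
      IsUnit (Bmat m) ∧ (Bmat m)⁻¹ = Dmat m := by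
  have hm2 : ((m : ℚ) - 2) ≠ 0 := by
    rcases hm with h | rfl
    · have h5 : (5 : ℚ) ≤ (m : ℚ) := by exact_mod_cast h
      linarith
    · norm_num
  have hm4 : ((m : ℚ) - 4) ≠ 0 := by
    rcases hm with h | rfl
    · have h5 : (5 : ℚ) ≤ (m : ℚ) := by exact_mod_cast h
      linarith
    · norm_num
  have hBD : Bmat m * Dmat m = 1 := Bmat_mul_Dmat_eq_one hm2 hm4
  have hDB : Dmat m * Bmat m = 1 := mul_eq_one_comm.mp hBD
  exact ⟨hBD, hDB, ⟨⟨Bmat m, Dmat m, hBD, hDB⟩, rfl⟩, Matrix.inv_eq_right_inv hBD⟩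
end

section
/- Let q ≥ 2 and let m be an integer with m ≥ 5 or m = 3. Then F(P,ℚ) is the internal direct sum V_0 ⊕ Ker W, i.e., every η ∈ F(P,ℚ) decomposes uniquely as η = η_0 + η_1 with η_0 ∈ Ker W and η_1 ∈ V_0. -/
/-! For `m ≠ 4` the map `p ↦ {p, M ∖ p}` identifies `O` with `P₂` (for `m = 4`, `p` and `M ∖ p`
give the same partition), so `V₀ ≅ F(O,ℚ)`, and under this identification `W` restricted to `V₀`
is the symmetric matrix `B`. With `T` the pair–point incidence matrix and `J` the all-ones
matrix, `B = T Tᵀ - 2` and `Tᵀ T = J + (m - 2)`, whence `B² = 4J + (m - 6)B + (2m - 8)` and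
`J B = (2m - 4)J`; so `B` has the explicit inverse `D` when `m ≠ 2, 4`. Thus `W` maps `V₀`
isomorphically onto `F(O,ℚ)`, which is the direct sum. -/

open Finset Matrix

theorem LinearMap.existsUnique_add_mem_ker_mem_range {R E F G : Type*} [Semiring R]
    [AddCommGroup E] [Module R E] [AddCommGroup F] [Module R F] [AddCommMonoid G] [Module R G]
    (W : E →ₗ[R] F) (ι : G →ₗ[R] E) (hW : Function.Bijective (W ∘ₗ ι)) (η : E) :
    ∃! d : E × E, d.1 ∈ ker W ∧ d.2 ∈ range ι ∧ η = d.1 + d.2 := by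
  let e := LinearEquiv.ofBijective (W ∘ₗ ι) hW
  have hWe : ∀ y, W (ι (e.symm y)) = y := e.apply_symm_apply
  refine ⟨(η - ι (e.symm (W η)), ι (e.symm (W η))),
    ⟨by rw [LinearMap.mem_ker, map_sub, hWe, sub_self], ⟨_, rfl⟩, (sub_add_cancel _ _).symm⟩, ?_⟩
  rintro ⟨d₁, _⟩ ⟨hd₁, ⟨y, rfl⟩, rfl⟩
  have hy : y = e.symm (W (d₁ + ι y)) := by
    rw [LinearEquiv.eq_symm_apply]
    simp [LinearMap.mem_ker.1 hd₁, e]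
  rw [← hy, add_sub_cancel_right]

section PairMatrices

variable {m : ℕ}

def allOnes (ι κ : Type*) : Matrix ι κ ℚ := of fun _ _ => 1

def pairIncidence (m : ℕ) : Matrix (OO m) (Fin m) ℚ := of fun p i => if i ∈ p.1 then 1 else 0

lemma card_inter_eq_two_iff {p t : OO m} : #(p.1 ∩ t.1) = 2 ↔ p = t := by
  refine ⟨fun h => Subtype.ext ?_, fun h => by rw [h, inter_self, t.2]⟩
  calc p.1 = p.1 ∩ t.1 := (eq_of_subset_of_card_le inter_subset_left (by rw [h, p.2])).symm
    _ = t.1 := eq_of_subset_of_card_le inter_subset_right (by rw [h, t.2])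

lemma card_inter_le_two (p t : OO m) : #(p.1 ∩ t.1) ≤ 2 :=
  (card_le_card inter_subset_left).trans p.2.le

lemma sum_ite_mem_and_mem (i j : Fin m) :
    ∑ p : OO m, (if i ∈ p.1 ∧ j ∈ p.1 then (1 : ℚ) else 0) = if i = j then (m : ℚ) - 1 else 1 := by
  rw [← sum_subtype (univ.powersetCard 2) (fun _ => mem_powersetCard_univ)
    (fun p => if i ∈ p ∧ j ∈ p then (1 : ℚ) else 0), sum_boole]
  have hpred : ∀ p : Finset (Fin m), (i ∈ p ∧ j ∈ p) ↔ {i, j} ⊆ p := by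
    simp [insert_subset_iff]
  simp only [hpred]
  rw [card_filter_powersetCard_subset _ _ _ (subset_univ _) (card_le_two), card_univ,
    Fintype.card_fin]
  by_cases hij : i = j
  · subst hij
    have : 1 ≤ m := i.pos
    simp [Nat.cast_sub this]
  · simp [hij, card_pair hij]

lemma sum_pairIncidence_row (p : OO m) : ∑ i, pairIncidence m p i = 2 := by
  simp [pairIncidence, p.2]

lemma sum_pairIncidence_col (i : Fin m) : ∑ p, pairIncidence m p i = (m : ℚ) - 1 := by
  simpa [pairIncidence] using sum_ite_mem_and_mem i i

lemma pairIncidence_mul_allOnes :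
    pairIncidence m * allOnes (Fin m) (Fin m) = (2 : ℚ) • allOnes (OO m) (Fin m) := by
  ext p j
  simp [allOnes, mul_apply, sum_pairIncidence_row]

lemma allOnes_mul_transpose_pairIncidence :
    allOnes (OO m) (Fin m) * (pairIncidence m)ᵀ = (2 : ℚ) • allOnes (OO m) (OO m) := by
  ext p t
  simp [allOnes, mul_apply, sum_pairIncidence_row]

lemma allOnes_mul_pairIncidence :
    allOnes (OO m) (OO m) * pairIncidence m = ((m : ℚ) - 1) • allOnes (OO m) (Fin m) := by
  ext p i
  simp [allOnes, mul_apply, sum_pairIncidence_col]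

lemma transpose_mul_pairIncidence :
    (pairIncidence m)ᵀ * pairIncidence m = allOnes (Fin m) (Fin m) + ((m : ℚ) - 2) • 1 := by
  ext i j
  simp only [mul_apply, transpose_apply, pairIncidence, of_apply, ite_zero_mul_ite_zero,
    mul_one, sum_ite_mem_and_mem, allOnes, Matrix.add_apply, Matrix.smul_apply, one_apply,
    smul_eq_mul]
  split_ifs <;> ring

lemma pairIncidence_mul_transpose :
    pairIncidence m * (pairIncidence m)ᵀ = Bmat m + (2 : ℚ) • 1 := by
  ext p t
  simp only [mul_apply, transpose_apply, pairIncidence, of_apply, ite_zero_mul_ite_zero,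
    mul_one, sum_boole, Bmat, Matrix.add_apply, Matrix.smul_apply, one_apply, smul_eq_mul]
  rw [show univ.filter (fun i => i ∈ p.1 ∧ i ∈ t.1) = p.1 ∩ t.1 by ext; simp]
  by_cases hpt : p = t
  · simp [hpt, t.2]
  · have := (card_inter_le_two p t).lt_of_ne (mt card_inter_eq_two_iff.1 hpt)
    interval_cases h : #(p.1 ∩ t.1) <;> simp [hpt]

lemma Bmat_eq_pairIncidence_mul_transpose_sub :
    Bmat m = pairIncidence m * (pairIncidence m)ᵀ - (2 : ℚ) • 1 := by
  rw [pairIncidence_mul_transpose, add_sub_cancel_right]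

lemma Bmat_mul_Bmat : Bmat m * Bmat m =
    (4 : ℚ) • allOnes (OO m) (OO m) + ((m : ℚ) - 6) • Bmat m + (2 * (m : ℚ) - 8) • 1 := by
  have hN : pairIncidence m * (pairIncidence m)ᵀ * (pairIncidence m * (pairIncidence m)ᵀ) =
      (4 : ℚ) • allOnes (OO m) (OO m) + ((m : ℚ) - 2) • (pairIncidence m * (pairIncidence m)ᵀ) := by
    rw [Matrix.mul_assoc, ← Matrix.mul_assoc (pairIncidence m)ᵀ, transpose_mul_pairIncidence,
      Matrix.add_mul, Matrix.mul_add, ← Matrix.mul_assoc, pairIncidence_mul_allOnes,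
      Matrix.smul_mul, allOnes_mul_transpose_pairIncidence, Matrix.smul_mul, Matrix.one_mul,
      Matrix.mul_smul, smul_smul]
    norm_num
  rw [Bmat_eq_pairIncidence_mul_transpose_sub]
  simp only [Matrix.sub_mul, Matrix.mul_sub, Matrix.smul_mul, Matrix.mul_smul, Matrix.one_mul,
    Matrix.mul_one, hN]
  module

lemma allOnes_mul_Bmat :
    allOnes (OO m) (OO m) * Bmat m = (2 * (m : ℚ) - 4) • allOnes (OO m) (OO m) := by
  rw [Bmat_eq_pairIncidence_mul_transpose_sub, Matrix.mul_sub, ← Matrix.mul_assoc,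
    allOnes_mul_pairIncidence, Matrix.smul_mul, allOnes_mul_transpose_pairIncidence,
    Matrix.mul_smul, Matrix.mul_one, smul_smul]
  module

lemma Dmat_eq (hm2 : m ≠ 2) (hm4 : m ≠ 4) :
    Dmat m = (-((m : ℚ) - 6) / (2 * ((m : ℚ) - 4))) • 1 + (1 / (2 * ((m : ℚ) - 4))) • Bmat m +
      (-1 / (((m : ℚ) - 4) * ((m : ℚ) - 2))) • allOnes (OO m) (OO m) := by
  have h2 : (m : ℚ) - 2 ≠ 0 := sub_ne_zero.2 (by exact_mod_cast hm2)
  have h4 : (m : ℚ) - 4 ≠ 0 := sub_ne_zero.2 (by exact_mod_cast hm4)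
  ext p t
  simp only [Dmat, Bmat, allOnes, Matrix.add_apply, Matrix.smul_apply, one_apply, of_apply,
    smul_eq_mul]
  by_cases hpt : p = t
  · subst hpt
    rw [if_pos rfl, if_pos rfl, inter_self, p.2, if_neg (by norm_num)]
    field_simp
    ring
  · simp only [hpt, if_false]
    split_ifs <;> field_simp <;> ring

lemma Dmat_mul_Bmat (hm2 : m ≠ 2) (hm4 : m ≠ 4) : Dmat m * Bmat m = 1 := by
  have h2 : (m : ℚ) - 2 ≠ 0 := sub_ne_zero.2 (by exact_mod_cast hm2)
  have h4 : (m : ℚ) - 4 ≠ 0 := sub_ne_zero.2 (by exact_mod_cast hm4)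
  rw [Dmat_eq hm2 hm4]
  simp only [Matrix.add_mul, Matrix.smul_mul, Matrix.one_mul, Bmat_mul_Bmat, allOnes_mul_Bmat]
  match_scalars <;> field_simp <;> ring

lemma isUnit_Bmat (hm2 : m ≠ 2) (hm4 : m ≠ 4) : IsUnit (Bmat m) :=
  isUnit_iff_exists_inv'.2 ⟨_, Dmat_mul_Bmat hm2 hm4⟩

end PairMatrices

section PairPartitions

variable {m q : ℕ}

lemma pair_compl_mem_Pset (hq : 2 ≤ q) (hm : 3 ≤ m) (p : OO m) :
    ({p.1, p.1ᶜ} : Ptn m) ∈ Pset m q := by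
  have hp : p.1.Nonempty := card_pos.1 (by rw [p.2]; norm_num)
  have hpc : p.1ᶜ.Nonempty := card_pos.1 (by rw [card_compl, p.2, Fintype.card_fin]; omega)
  refine ⟨⟨by simp [hp, hpc], fun i => ?_⟩, (card_insert_le _ _).trans hq⟩
  by_cases hi : i ∈ p.1
  · exact ⟨p.1, by simp [hi], by aesop⟩
  · exact ⟨p.1ᶜ, by simp [hi], by aesop⟩

def pairPartition (hq : 2 ≤ q) (hm : 3 ≤ m) (p : OO m) : PP m q :=
  ⟨{p.1, p.1ᶜ}, pair_compl_mem_Pset hq hm p⟩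

lemma pairPartition_injective (hq : 2 ≤ q) (hm : 3 ≤ m) (hm4 : m ≠ 4) :
    Function.Injective (pairPartition (q := q) hq hm) := by
  intro p t h
  have hp : p.1 ∈ (pairPartition hq hm t).1 := h ▸ mem_insert_self _ _
  rcases mem_insert.1 hp with hpt | hpt
  · exact Subtype.ext hpt
  · have := congrArg card (mem_singleton.1 hpt)
    rw [p.2, card_compl, t.2, Fintype.card_fin] at this
    omega

lemma mem_P2set_iff (hq : 2 ≤ q) (hm : 3 ≤ m) (α : PP m q) :
    α.1 ∈ P2set m ↔ ∃ p, pairPartition hq hm p = α :=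
  ⟨fun ⟨p, hp, hα⟩ => ⟨⟨p, hp⟩, Subtype.ext hα.symm⟩, fun ⟨p, hp⟩ => ⟨p.1, p.2, by rw [← hp]; rfl⟩⟩

lemma card_inter_ne_one_iff (t p : OO m) : #(t.1 ∩ p.1) ≠ 1 ↔ t.1 ⊆ p.1 ∨ t.1 ⊆ p.1ᶜ := by
  have h2 : t.1 ⊆ p.1 ↔ #(t.1 ∩ p.1) = 2 :=
    ⟨fun h => by rw [inter_eq_left.2 h, t.2], fun h => by rw [card_inter_eq_two_iff.1 h]⟩
  have h0 : t.1 ⊆ p.1ᶜ ↔ #(t.1 ∩ p.1) = 0 := by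
    rw [subset_compl_iff_disjoint_right, disjoint_iff_inter_eq_empty, card_eq_zero]
  have := card_inter_le_two t p
  rw [h2, h0]
  omega

lemma Delta_pairPartition (hq : 2 ≤ q) (hm : 3 ≤ m) (p t : OO m) :
    Delta (pairPartition hq hm p) t = Bmat m p t := by
  have := card_inter_ne_one_iff t p
  simp only [Delta, pairPartition, Bmat, of_apply, mem_insert, mem_singleton, exists_eq_or_imp,
    exists_eq_left, inter_comm p.1]
  split_ifs <;> tauto

def pairEmbedding (m q : ℕ) : Matrix (PP m q) (OO m) ℚ :=
  of fun α p => if α.1 = {p.1, p.1ᶜ} then 1 else 0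

lemma pairEmbedding_apply (hq : 2 ≤ q) (hm : 3 ≤ m) (α : PP m q) (p : OO m) :
    pairEmbedding m q α p = if pairPartition hq hm p = α then 1 else 0 := by
  simp only [pairEmbedding, of_apply, Subtype.ext_iff, eq_comm (a := α.1)]
  rfl

noncomputable def deltaMatrix (m q : ℕ) : Matrix (PP m q) (OO m) ℚ := of Delta

lemma WLin_apply_eq_vecMul (η : PP m q → ℚ) : WLin m q η = η ᵥ* deltaMatrix m q := rfl

lemma transpose_pairEmbedding_mul_deltaMatrix (hq : 2 ≤ q) (hm : 3 ≤ m) :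
    (pairEmbedding m q)ᵀ * deltaMatrix m q = Bmat m := by
  ext p t
  simp [mul_apply, deltaMatrix, pairEmbedding_apply hq hm, Delta_pairPartition]

lemma WLin_comp_mulVecLin_pairEmbedding (hq : 2 ≤ q) (hm : 3 ≤ m) :
    WLin m q ∘ₗ (pairEmbedding m q).mulVecLin = (Bmat m).vecMulLinear := by
  refine LinearMap.ext fun y => ?_
  rw [LinearMap.comp_apply, mulVecLin_apply, WLin_apply_eq_vecMul, ← vecMul_transpose,
    vecMul_vecMul, transpose_pairEmbedding_mul_deltaMatrix hq hm, vecMulLinear_apply]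

lemma pairEmbedding_mulVec_pairPartition (hq : 2 ≤ q) (hm : 3 ≤ m) (hm4 : m ≠ 4)
    (y : OO m → ℚ) (p : OO m) : (pairEmbedding m q *ᵥ y) (pairPartition hq hm p) = y p := by
  simp [mulVec, dotProduct, pairEmbedding_apply hq hm, (pairPartition_injective hq hm hm4).eq_iff]

lemma pairEmbedding_mulVec_of_notMem_P2set (y : OO m → ℚ) {α : PP m q} (hα : α.1 ∉ P2set m) :
    (pairEmbedding m q *ᵥ y) α = 0 := by
  rw [mulVec, dotProduct]
  refine sum_eq_zero fun p _ => ?_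
  have hp : α.1 ≠ {p.1, p.1ᶜ} := fun h => hα ⟨p.1, p.2, h⟩
  simp [pairEmbedding, hp]

lemma coe_range_mulVecLin_pairEmbedding (hq : 2 ≤ q) (hm : 3 ≤ m) (hm4 : m ≠ 4) :
    (LinearMap.range (pairEmbedding m q).mulVecLin : Set (PP m q → ℚ)) = V0 m q := by
  ext v
  constructor
  · rintro ⟨y, rfl⟩ α hα
    exact pairEmbedding_mulVec_of_notMem_P2set y hα
  · intro hv
    refine ⟨fun p => v (pairPartition hq hm p), funext fun α => ?_⟩
    by_cases hα : α.1 ∈ P2set m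
    · obtain ⟨p, rfl⟩ := (mem_P2set_iff hq hm α).1 hα
      exact pairEmbedding_mulVec_pairPartition hq hm hm4 _ p
    · rw [hv α hα, mulVecLin_apply, pairEmbedding_mulVec_of_notMem_P2set _ hα]

end PairPartitions

/-- for `q ≥ 2` and `m ≥ 5` or `m = 3`, `F(P,ℚ) = V₀ ⊕ Ker W`: every `η`
decomposes uniquely as `η = η₀ + η₁` with `η₀ ∈ Ker W` and `η₁ ∈ V₀`. -/
theorem direct_sum_V0_kerW (m q : ℕ) (hq : 2 ≤ q) (hm : 5 ≤ m ∨ m = 3)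
    (η : PP m q → ℚ) :
    ∃! d : (PP m q → ℚ) × (PP m q → ℚ),
      d.1 ∈ LinearMap.ker (WLin m q) ∧ d.2 ∈ V0 m q ∧ η = d.1 + d.2 := by
  have hm3 : 3 ≤ m := by omega
  have hm4 : m ≠ 4 := by omega
  have hB : IsUnit (Bmat m) := isUnit_Bmat (by omega) hm4
  rw [← coe_range_mulVecLin_pairEmbedding hq hm3 hm4]
  refine LinearMap.existsUnique_add_mem_ker_mem_range _ _ ?_ η
  rw [WLin_comp_mulVecLin_pairEmbedding hq hm3, coe_vecMulLinear]
  exact ⟨vecMul_injective_iff_isUnit.2 hB, vecMul_surjective_iff_isUnit.2 hB⟩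
end

section
/- Let q ≥ 2 and let m be an integer with m ≥ 5 or m = 3. If η_0 ∈ Ker W and η_1 ∈ V_0, then Stab(η_0 + η_1) = Stab(η_0) ∩ Stab(η_1). -/
lemma card_pair_fiber {m : ℕ} (i : Fin m) (Q : Finset (Fin m) → Prop) [DecidablePred Q] :
    ((Finset.univ : Finset (OO m)).filter fun p => i ∈ p.1 ∧ Q p.1).card
      = ((Finset.univ : Finset (Fin m)).filter fun x => x ≠ i ∧ Q {i, x}).card := by
  symm
  refine Finset.card_bij (fun x hx => ⟨({i, x} : Finset (Fin m)), ?_⟩) ?_ ?_ ?_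
  · simp only [Finset.mem_filter, Finset.mem_univ, true_and] at hx
    rw [Finset.card_insert_of_notMem (by simp [Ne.symm hx.1]), Finset.card_singleton]
  · intro x hx
    simp only [Finset.mem_filter, Finset.mem_univ, true_and] at hx ⊢
    exact ⟨Finset.mem_insert_self _ _, hx.2⟩
  · intro x hx y hy h
    simp only [Finset.mem_filter, Finset.mem_univ, true_and] at hx hy
    have : ({i, x} : Finset (Fin m)) = {i, y} := congrArg Subtype.val h
    have hxm : x ∈ ({i, y} : Finset (Fin m)) := this ▸ (by simp)
    simp only [Finset.mem_insert, Finset.mem_singleton] at hxm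
    exact hxm.resolve_left hx.1
  · intro p hp
    simp only [Finset.mem_filter, Finset.mem_univ, true_and] at hp
    obtain ⟨a, b, hab, hpab⟩ := Finset.card_eq_two.1 p.2
    have hip : i ∈ p.1 := hp.1
    rw [hpab] at hip
    simp only [Finset.mem_insert, Finset.mem_singleton] at hip
    rcases hip with rfl | rfl
    · refine ⟨b, ?_, ?_⟩
      · simp only [Finset.mem_filter, Finset.mem_univ, true_and]
        exact ⟨Ne.symm hab, by rw [← hpab]; exact hp.2⟩
      · exact Subtype.ext hpab.symm
    · refine ⟨a, ?_, ?_⟩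
      · simp only [Finset.mem_filter, Finset.mem_univ, true_and]
        refine ⟨hab, ?_⟩
        rw [show ({i, a} : Finset (Fin m)) = {a, i} from Finset.pair_comm i a, ← hpab]
        exact hp.2
      · exact Subtype.ext ((hpab.trans (Finset.pair_comm a i)).symm)

open Finset in
lemma count_anchor {m : ℕ} (i : Fin m) (r : OO m) :
    ((Finset.univ : Finset (OO m)).filter fun p => i ∈ p.1 ∧ (p.1 ∩ r.1).card = 1).card
      = if i ∈ r.1 then m - 2 else 2 := by
  rw [card_pair_fiber i (fun t => (t ∩ r.1).card = 1)]
  by_cases hir : i ∈ r.1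
  · simp only [hir, if_true]
    -- r.1 = {i, k}
    obtain ⟨a, b, hab, hr⟩ := Finset.card_eq_two.1 r.2
    have hik : ∃ k, k ≠ i ∧ r.1 = {i, k} := by
      rw [hr] at hir ⊢
      simp only [Finset.mem_insert, Finset.mem_singleton] at hir
      rcases hir with rfl | rfl
      · exact ⟨b, Ne.symm hab, rfl⟩
      · exact ⟨a, hab, Finset.pair_comm a i⟩
    obtain ⟨k, hki, hrk⟩ := hik
    have hset : ((Finset.univ : Finset (Fin m)).filter fun x => x ≠ i ∧ ({i, x} ∩ r.1).card = 1)
        = ({i, k} : Finset (Fin m))ᶜ := by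
      ext x
      simp only [Finset.mem_filter, Finset.mem_univ, true_and, Finset.mem_compl,
        Finset.mem_insert, Finset.mem_singleton, hrk]
      push_neg
      constructor
      · rintro ⟨hxi, hcard⟩
        refine ⟨hxi, ?_⟩
        rintro rfl
        have : ({i, x} : Finset (Fin m)) ∩ {i, x} = {i, x} := Finset.inter_self _
        rw [this] at hcard
        have : ({i, x} : Finset (Fin m)).card = 2 := by
          rw [Finset.card_insert_of_notMem (by simp [Ne.symm hxi]), Finset.card_singleton]
        omega
      · rintro ⟨hxi, hxk⟩
        refine ⟨hxi, ?_⟩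
        have : ({i, x} : Finset (Fin m)) ∩ {i, k} = {i} := by
          ext y
          simp only [Finset.mem_inter, Finset.mem_insert, Finset.mem_singleton]
          constructor
          · rintro ⟨hy1, hy2⟩
            rcases hy1 with rfl | rfl
            · rfl
            · rcases hy2 with rfl | rfl
              · exact absurd rfl hxi
              · exact absurd rfl hxk
          · rintro rfl; exact ⟨Or.inl rfl, Or.inl rfl⟩
        rw [this, Finset.card_singleton]
    rw [hset, Finset.card_compl]
    have : ({i, k} : Finset (Fin m)).card = 2 := by
      rw [Finset.card_insert_of_notMem (by simp [Ne.symm hki]), Finset.card_singleton]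
    rw [this, Fintype.card_fin]
  · simp only [hir, if_false]
    have hset : ((Finset.univ : Finset (Fin m)).filter fun x => x ≠ i ∧ ({i, x} ∩ r.1).card = 1)
        = r.1 := by
      ext x
      simp only [Finset.mem_filter, Finset.mem_univ, true_and]
      have hinter : ∀ x : Fin m, ({i, x} : Finset (Fin m)) ∩ r.1 = {x} ∩ r.1 := by
        intro x
        rw [Finset.insert_inter_of_notMem hir]
      constructor
      · rintro ⟨hxi, hcard⟩
        rw [hinter] at hcard
        by_contra hxr
        rw [Finset.singleton_inter_of_notMem hxr] at hcard
        simp at hcard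
      · intro hxr
        refine ⟨fun h => hir (h ▸ hxr), ?_⟩
        rw [hinter, Finset.singleton_inter_of_mem hxr, Finset.card_singleton]
    rw [hset, r.2]

lemma core_inj {m : ℕ} (hm3 : 3 ≤ m) (hm4 : m ≠ 4) (f : OO m → ℚ)
    (H : ∀ p : OO m, ∑ r : OO m, (if (p.1 ∩ r.1).card = 1 then f r else 0) = 0) :
    ∀ t : OO m, f t = 0 := by
  classical
  set T : ℚ := ∑ r : OO m, f r with hT_def
  set S : Fin m → ℚ := fun i => ∑ r : OO m, if i ∈ r.1 then f r else 0 with hS_def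
  have hA : ∀ i : Fin m, 2 * T + ((m : ℚ) - 4) * S i = 0 := by
    intro i
    have h1 : ∑ p : OO m, (if i ∈ p.1 then
        (∑ r : OO m, if (p.1 ∩ r.1).card = 1 then f r else 0) else 0) = 0 := by
      simp [H]
    have h2 : ∑ p : OO m, (if i ∈ p.1 then
        (∑ r : OO m, if (p.1 ∩ r.1).card = 1 then f r else 0) else 0)
        = ∑ r : OO m, (((Finset.univ : Finset (OO m)).filter
            fun p => i ∈ p.1 ∧ (p.1 ∩ r.1).card = 1).card : ℚ) * f r := by
      have step1 : ∀ p : OO m, (if i ∈ p.1 then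
          (∑ r : OO m, if (p.1 ∩ r.1).card = 1 then f r else 0) else 0)
          = ∑ r : OO m, if i ∈ p.1 ∧ (p.1 ∩ r.1).card = 1 then f r else 0 := by
        intro p
        by_cases hip : i ∈ p.1 <;> simp [hip]
      rw [Finset.sum_congr rfl fun p _ => step1 p, Finset.sum_comm]
      refine Finset.sum_congr rfl fun r _ => ?_
      rw [← Finset.sum_filter, Finset.sum_const, nsmul_eq_mul]
    rw [h2] at h1
    have h3 : ∑ r : OO m, (((Finset.univ : Finset (OO m)).filter
            fun p => i ∈ p.1 ∧ (p.1 ∩ r.1).card = 1).card : ℚ) * f r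
        = ∑ r : OO m, (2 * f r + (if i ∈ r.1 then ((m : ℚ) - 4) * f r else 0)) := by
      refine Finset.sum_congr rfl fun r _ => ?_
      rw [count_anchor i r]
      by_cases hir : i ∈ r.1 <;> simp only [hir, if_true, if_false]
      · rw [Nat.cast_sub (by omega)]
        push_cast
        ring
      · push_cast
        ring
    rw [h3, Finset.sum_add_distrib, ← Finset.mul_sum, ← hT_def] at h1
    have h4 : ∑ r : OO m, (if i ∈ r.1 then ((m : ℚ) - 4) * f r else 0)
        = ((m : ℚ) - 4) * S i := by
      rw [hS_def, Finset.mul_sum]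
      refine Finset.sum_congr rfl fun r _ => ?_
      by_cases hir : i ∈ r.1 <;> simp [hir]
    rw [h4] at h1
    exact h1
  have hB : ∑ i : Fin m, S i = 2 * T := by
    rw [hS_def, Finset.sum_comm]
    rw [hT_def, Finset.mul_sum]
    refine Finset.sum_congr rfl fun r _ => ?_
    rw [← Finset.sum_filter, Finset.sum_const, nsmul_eq_mul]
    congr 1
    have : (Finset.univ.filter fun i : Fin m => i ∈ r.1) = r.1 := by
      ext x; simp
    rw [this, r.2]
    norm_num
  have hT0 : T = 0 := by
    have hsum : ∑ i : Fin m, (2 * T + ((m : ℚ) - 4) * S i) = 0 := by simp [hA]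
    rw [Finset.sum_add_distrib, Finset.sum_const, ← Finset.mul_sum, hB,
      Finset.card_univ, Fintype.card_fin, nsmul_eq_mul] at hsum
    have hm' : (3 : ℚ) ≤ (m : ℚ) := by exact_mod_cast hm3
    have hne : (4 * (m : ℚ) - 8) ≠ 0 := by nlinarith
    have : (4 * (m : ℚ) - 8) * T = 0 := by linear_combination hsum
    exact (mul_eq_zero.1 this).resolve_left hne
  have hS0 : ∀ i, S i = 0 := by
    intro i
    have := hA i
    rw [hT0] at this
    have hm4' : ((m : ℚ) - 4) ≠ 0 := by
      intro h
      apply hm4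
      have : (m : ℚ) = 4 := by linarith
      exact_mod_cast this
    have h5 : ((m : ℚ) - 4) * S i = 0 := by linarith
    exact (mul_eq_zero.1 h5).resolve_left hm4'
  intro t
  obtain ⟨a, b, hab, hpt⟩ := Finset.card_eq_two.1 t.2
  have hat : a ∈ t.1 := by rw [hpt]; simp
  have hbt : b ∈ t.1 := by rw [hpt]; simp
  have hkey : ∀ r : OO m, (if a ∈ r.1 then f r else 0) + (if b ∈ r.1 then f r else 0)
      = (if (t.1 ∩ r.1).card = 1 then f r else 0) + (if r = t then 2 * f r else 0) := by
    intro r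
    by_cases ha : a ∈ r.1 <;> by_cases hb : b ∈ r.1
    · have hsub : t.1 ⊆ r.1 := by
        rw [hpt]; intro x hx
        simp only [Finset.mem_insert, Finset.mem_singleton] at hx
        rcases hx with rfl | rfl <;> assumption
      have heq : r = t := Subtype.ext
        (Finset.eq_of_subset_of_card_le hsub (by rw [t.2, r.2])).symm
      have hcap : (t.1 ∩ r.1).card = 2 := by
        rw [heq, Finset.inter_self, t.2]
      simp [heq, hat, hbt, t.2]
      ring
    · have hne : r ≠ t := fun h => hb (h ▸ hbt)
      have hcap : t.1 ∩ r.1 = {a} := by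
        ext y
        rw [hpt]
        simp only [Finset.mem_inter, Finset.mem_insert, Finset.mem_singleton]
        constructor
        · rintro ⟨(rfl | rfl), hy⟩
          · rfl
          · exact absurd hy hb
        · rintro rfl; exact ⟨Or.inl rfl, ha⟩
      simp [ha, hb, hne, hcap]
    · have hne : r ≠ t := fun h => ha (h ▸ hat)
      have hcap : t.1 ∩ r.1 = {b} := by
        ext y
        rw [hpt]
        simp only [Finset.mem_inter, Finset.mem_insert, Finset.mem_singleton]
        constructor
        · rintro ⟨(rfl | rfl), hy⟩
          · exact absurd hy ha
          · rfl
        · rintro rfl; exact ⟨Or.inr rfl, hb⟩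
      simp [ha, hb, hne, hcap]
    · have hne : r ≠ t := fun h => ha (h ▸ hat)
      have hcap : t.1 ∩ r.1 = ∅ := by
        ext y
        rw [hpt]
        simp only [Finset.mem_inter, Finset.mem_insert, Finset.mem_singleton,
            Finset.notMem_empty, iff_false, not_and]
        rintro (rfl | rfl) <;> assumption
      simp [ha, hb, hne, hcap]
  have hsum : S a + S b = 0 + 2 * f t := by
    rw [hS_def]
    simp only
    rw [← Finset.sum_add_distrib, Finset.sum_congr rfl fun r _ => hkey r,
      Finset.sum_add_distrib, H t]
    congr 1
    rw [Finset.sum_ite_eq' Finset.univ t fun r => 2 * f r]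
    simp
  rw [hS0 a, hS0 b] at hsum
  linarith

section AuxStab

variable {m q : ℕ}

lemma permPart_permPart (g h : Equiv.Perm (Fin m)) (α : Ptn m) :
    permPart g (permPart h α) = permPart (g * h) α := by
  simp only [permPart, Finset.image_image]
  congr 1
  funext c
  simp only [Function.comp_apply]
  rw [Finset.image_image]
  rfl

lemma permPart_one (α : Ptn m) : permPart 1 α = α := by
  simp only [permPart]
  have : (fun c : Finset (Fin m) => c.image ⇑(1 : Equiv.Perm (Fin m))) = id := by
    funext c
    simp
  rw [this, Finset.image_id]

lemma image_compl_perm (g : Equiv.Perm (Fin m)) (s : Finset (Fin m)) :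
    sᶜ.image ⇑g = (s.image ⇑g)ᶜ := by
  ext y
  simp only [Finset.mem_image, Finset.mem_compl]
  constructor
  · rintro ⟨x, hx, rfl⟩ ⟨z, hz, hzy⟩
    exact hx (g.injective hzy ▸ hz)
  · intro hy
    refine ⟨g⁻¹ y, fun hmem => hy ⟨g⁻¹ y, hmem, by simp⟩, by simp⟩

lemma permPart_P2 (g : Equiv.Perm (Fin m)) {α : Ptn m} (hα : α ∈ P2set m) :
    permPart g α ∈ P2set m := by
  obtain ⟨p, hp2, rfl⟩ := hα
  refine ⟨p.image ⇑g, by rw [Finset.card_image_of_injective _ g.injective, hp2], ?_⟩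
  simp only [permPart, Finset.image_insert, Finset.image_singleton]
  rw [image_compl_perm]

lemma pairPart_mem (hm3 : 3 ≤ m) (hq : 2 ≤ q) (t : Finset (Fin m)) (ht : t.card = 2) :
    ({t, tᶜ} : Ptn m) ∈ Pset m q := by
  have hc : tᶜ.card = m - 2 := by rw [Finset.card_compl, ht, Fintype.card_fin]
  refine ⟨⟨?_, ?_⟩, ?_⟩
  · intro c hc'
    simp only [Finset.mem_insert, Finset.mem_singleton] at hc'
    rcases hc' with rfl | rfl
    · exact Finset.card_pos.1 (by omega)
    · exact Finset.card_pos.1 (by omega)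
  · intro i
    by_cases hit : i ∈ t
    · refine ⟨t, ⟨by simp, hit⟩, ?_⟩
      rintro c ⟨hc', hic⟩
      simp only [Finset.mem_insert, Finset.mem_singleton] at hc'
      rcases hc' with rfl | rfl
      · rfl
      · exact absurd hit (Finset.mem_compl.1 hic)
    · refine ⟨tᶜ, ⟨by simp, Finset.mem_compl.2 hit⟩, ?_⟩
      rintro c ⟨hc', hic⟩
      simp only [Finset.mem_insert, Finset.mem_singleton] at hc'
      rcases hc' with rfl | rfl
      · exact absurd hic hit
      · rfl
  · calc ({t, tᶜ} : Ptn m).card ≤ ({tᶜ} : Ptn m).card + 1 := Finset.card_insert_le _ _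
      _ ≤ q := by rw [Finset.card_singleton]; omega

lemma Delta_pair (p t : OO m) (α : PP m q) (hα : α.1 = {t.1, t.1ᶜ}) :
    Delta α p = if (p.1 ∩ t.1).card = 1 then 1 else 0 := by
  have hcond : (∃ c ∈ α.1, p.1 ⊆ c) ↔ ¬ (p.1 ∩ t.1).card = 1 := by
    rw [hα]
    constructor
    · rintro ⟨c, hc, hsub⟩ h1
      simp only [Finset.mem_insert, Finset.mem_singleton] at hc
      rcases hc with rfl | rfl
      · have hpc : p.1 ∩ t.1 = p.1 := Finset.inter_eq_left.2 hsub
        rw [hpc, p.2] at h1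
        omega
      · have : p.1 ∩ t.1 = ∅ := by
          rw [Finset.eq_empty_iff_forall_notMem]
          intro x hx
          rw [Finset.mem_inter] at hx
          exact Finset.mem_compl.1 (hsub hx.1) hx.2
        rw [this] at h1
        simp at h1
    · intro h
      have hle : (p.1 ∩ t.1).card ≤ 2 :=
        le_trans (Finset.card_le_card Finset.inter_subset_left) (le_of_eq p.2)
      have hcases : (p.1 ∩ t.1).card = 0 ∨ (p.1 ∩ t.1).card = 2 := by omega
      rcases hcases with h0 | h2
      · refine ⟨t.1ᶜ, by simp, ?_⟩
        intro x hx
        rw [Finset.mem_compl]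
        intro hxt
        have : x ∈ p.1 ∩ t.1 := Finset.mem_inter.2 ⟨hx, hxt⟩
        rw [Finset.card_eq_zero.1 h0] at this
        exact absurd this (Finset.notMem_empty x)
      · refine ⟨t.1, by simp, ?_⟩
        have : p.1 ∩ t.1 = p.1 :=
          Finset.eq_of_subset_of_card_le Finset.inter_subset_left (by rw [p.2, h2])
        rw [← this]
        exact Finset.inter_subset_right
  show (if ∃ c ∈ α.1, p.1 ⊆ c then (0 : ℚ) else 1) = _
  by_cases h1 : (p.1 ∩ t.1).card = 1
  · rw [if_neg (fun hx => (hcond.1 hx) h1), if_pos h1]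
  · rw [if_pos (hcond.2 h1), if_neg h1]

lemma permPP_cancel (g : Equiv.Perm (Fin m)) (β : PP m q) :
    permPP g⁻¹ (permPP g β) = β := by
  apply Subtype.ext
  show permPart g⁻¹ (permPart g β.1) = β.1
  rw [permPart_permPart, inv_mul_cancel, permPart_one]

lemma permPP_cancel' (g : Equiv.Perm (Fin m)) (β : PP m q) :
    permPP g (permPP g⁻¹ β) = β := by
  apply Subtype.ext
  show permPart g (permPart g⁻¹ β.1) = β.1
  rw [permPart_permPart, mul_inv_cancel, permPart_one]

lemma Delta_perm (g : Equiv.Perm (Fin m)) (β : PP m q) (p : OO m) :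
    Delta (permPP g β) p
      = Delta β ⟨p.1.image ⇑g⁻¹,
          by rw [Finset.card_image_of_injective _ (g⁻¹ : Equiv.Perm (Fin m)).injective, p.2]⟩ := by
  have hiff : (∃ c ∈ (permPP g β).1, p.1 ⊆ c) ↔ ∃ c ∈ β.1, p.1.image ⇑g⁻¹ ⊆ c := by
    constructor
    · rintro ⟨c, hc, hsub⟩
      simp only [permPP, permPart, Finset.mem_image] at hc
      obtain ⟨d, hd, rfl⟩ := hc
      refine ⟨d, hd, ?_⟩
      intro x hx
      simp only [Finset.mem_image] at hx
      obtain ⟨y, hy, rfl⟩ := hx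
      have hyc := hsub hy
      simp only [Finset.mem_image] at hyc
      obtain ⟨z, hz, hzy⟩ := hyc
      have : g⁻¹ y = z := by rw [← hzy]; simp
      rw [this]
      exact hz
    · rintro ⟨d, hd, hsub⟩
      refine ⟨d.image ⇑g, ?_, ?_⟩
      · simp only [permPP, permPart, Finset.mem_image]
        exact ⟨d, hd, rfl⟩
      · intro x hx
        have hgx : g⁻¹ x ∈ d := hsub (Finset.mem_image_of_mem _ hx)
        exact Finset.mem_image.2 ⟨g⁻¹ x, hgx, by simp⟩
  show (if ∃ c ∈ (permPP g β).1, p.1 ⊆ c then (0:ℚ) else 1) = _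
  rw [if_congr hiff rfl rfl]
  rfl

lemma WLin_apply (η : PP m q → ℚ) (p : OO m) :
    WLin m q η p = ∑ α : PP m q, η α * Delta α p := rfl

lemma WLin_perm_ker (g : Equiv.Perm (Fin m)) (η : PP m q → ℚ)
    (hη : WLin m q η = 0) : WLin m q (permF g η) = 0 := by
  funext p
  have hre : WLin m q (permF g η) p
      = WLin m q η ⟨p.1.image ⇑g⁻¹,
          by rw [Finset.card_image_of_injective _ (g⁻¹ : Equiv.Perm (Fin m)).injective, p.2]⟩ := by
    rw [WLin_apply, WLin_apply]
    refine (Fintype.sum_equiv ⟨permPP g, permPP g⁻¹, permPP_cancel g, permPP_cancel' g⟩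
      _ _ fun β => ?_).symm
    show η β * Delta β _ = permF g η (permPP g β) * Delta (permPP g β) p
    rw [Delta_perm g β p]
    congr 1
    show η β = η (permPP g⁻¹ (permPP g β))
    rw [permPP_cancel]
  rw [hre, hη]
  rfl

lemma permF_V0 (g : Equiv.Perm (Fin m)) {η : PP m q → ℚ} (hη : η ∈ V0 m q) :
    permF g η ∈ V0 m q := by
  intro α hα
  apply hη
  intro hmem
  apply hα
  have hid : α.1 = permPart g (permPart g⁻¹ α.1) := by
    rw [permPart_permPart, mul_inv_cancel, permPart_one]
  rw [hid]
  exact permPart_P2 g hmem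

lemma V0_inter_ker (hm3 : 3 ≤ m) (hm4 : m ≠ 4) (hq : 2 ≤ q)
    (δ : PP m q → ℚ) (hδ : δ ∈ V0 m q) (hW : WLin m q δ = 0) : δ = 0 := by
  classical
  have hmem : ∀ t : OO m, ({t.1, t.1ᶜ} : Ptn m) ∈ Pset m q :=
    fun t => pairPart_mem hm3 hq t.1 t.2
  set e : OO m → PP m q := fun t => ⟨{t.1, t.1ᶜ}, hmem t⟩ with he
  have hinj : Function.Injective e := by
    intro s t hst
    have h1 : s.1 ∈ ({t.1, t.1ᶜ} : Ptn m) := by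
      have hval : ({s.1, s.1ᶜ} : Ptn m) = {t.1, t.1ᶜ} := congrArg Subtype.val hst
      rw [← hval]
      exact Finset.mem_insert_self _ _
    simp only [Finset.mem_insert, Finset.mem_singleton] at h1
    rcases h1 with h1 | h1
    · exact Subtype.ext h1
    · exfalso
      have hcc : t.1ᶜ.card = m - 2 := by
        rw [Finset.card_compl, t.2, Fintype.card_fin]
      have hs2 := s.2
      rw [h1, hcc] at hs2
      omega
  set f : OO m → ℚ := fun t => δ (e t) with hf
  have hH : ∀ p : OO m, ∑ r : OO m, (if (p.1 ∩ r.1).card = 1 then f r else 0) = 0 := by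
    intro p
    have h0 : WLin m q δ p = 0 := by rw [hW]; rfl
    rw [WLin_apply] at h0
    have hsplit : ∑ α ∈ Finset.univ.filter (fun α : PP m q => α.1 ∈ P2set m),
        δ α * Delta α p = ∑ α : PP m q, δ α * Delta α p := by
      refine Finset.sum_subset (Finset.filter_subset _ _) ?_
      intro α _ hα
      rw [Finset.mem_filter] at hα
      push_neg at hα
      rw [hδ α (hα (Finset.mem_univ α)), zero_mul]
    have himg : Finset.univ.filter (fun α : PP m q => α.1 ∈ P2set m)
        = Finset.image e Finset.univ := by
      ext α
      simp only [Finset.mem_filter, Finset.mem_univ, true_and, Finset.mem_image]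
      constructor
      · rintro ⟨p', hp', hα⟩
        exact ⟨⟨p', hp'⟩, Subtype.ext hα.symm⟩
      · rintro ⟨t, rfl⟩
        exact ⟨t.1, t.2, rfl⟩
    rw [← hsplit, himg, Finset.sum_image (fun x _ y _ h => hinj h)] at h0
    refine Eq.trans (Finset.sum_congr rfl fun r _ => ?_) h0
    rw [Delta_pair p r (e r) rfl]
    by_cases hc : (p.1 ∩ r.1).card = 1 <;> simp [hc, hf]
  have hf0 := core_inj hm3 hm4 f hH
  funext α
  show δ α = 0
  by_cases hα : α.1 ∈ P2set m
  · obtain ⟨p', hp', hval⟩ := hα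
    have hαe : α = e ⟨p', hp'⟩ := Subtype.ext hval
    rw [hαe]
    exact hf0 _
  · exact hδ α hα

end AuxStab

/-- for `q ≥ 2` and `m ≥ 5` or `m = 3`, if `η₀ ∈ Ker W` and `η₁ ∈ V₀`, then
`Stab(η₀ + η₁) = Stab(η₀) ∩ Stab(η₁)`. -/
theorem stab_add (m q : ℕ) (hq : 2 ≤ q) (hm : 5 ≤ m ∨ m = 3)
    (η₀ η₁ : PP m q → ℚ) (h₀ : WLin m q η₀ = 0) (h₁ : η₁ ∈ V0 m q) :
    StabSet (η₀ + η₁) = StabSet η₀ ∩ StabSet η₁ := by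
  have hm3 : 3 ≤ m := by rcases hm with h | h <;> omega
  have hm4 : m ≠ 4 := by rcases hm with h | h <;> omega
  ext g
  simp only [StabSet, Set.mem_setOf_eq, Set.mem_inter_iff]
  constructor
  · intro h
    have hadd : permF g η₀ + permF g η₁ = η₀ + η₁ := h
    set δ : PP m q → ℚ := permF g η₁ - η₁ with hδdef
    have hδV : δ ∈ V0 m q := by
      intro α hα
      simp only [hδdef, Pi.sub_apply]
      rw [permF_V0 g h₁ α hα, h₁ α hα, sub_zero]
    have hδ0 : δ = η₀ - permF g η₀ := by
      funext α
      have hcf := congrFun hadd α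
      simp only [Pi.add_apply] at hcf
      simp only [hδdef, Pi.sub_apply]
      linarith
    have hWδ : WLin m q δ = 0 := by
      rw [hδ0, map_sub, h₀, WLin_perm_ker g η₀ h₀, sub_zero]
    have hz := V0_inter_ker hm3 hm4 hq δ hδV hWδ
    constructor
    · have hz0 : η₀ - permF g η₀ = 0 := by rw [← hδ0]; exact hz
      exact (sub_eq_zero.1 hz0).symm
    · have hz1 : permF g η₁ - η₁ = 0 := hz
      exact sub_eq_zero.1 hz1
  · rintro ⟨h0, h1⟩
    have : permF g (η₀ + η₁) = permF g η₀ + permF g η₁ := rfl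
    rw [this, h0, h1]
end
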